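/- arXiv:1004.3470 — 4 statements merged into one kernel-verified Lean document; each statement's English description precedes it below -/
import Mathlib

section
/- For every positive integer n and every integer i with 0 ≤ i ≤ n, the polynomial k^n can be written in the basis of binomial coefficient polynomials as k^n = Σ_{i=0}^{n} A(n,i) · C(k+n-i, n), where A(n,i) = Σ_{j=0}^{i} (-1)^j · C(n+1, j) · (i-j)^n is the Eulerian number. -/
/-- Eulerian number `A(n,i) = Σ_{j=0}^{i} (-1)^j C(n+1,j) (i-j)^n`. -/
def eulerianA (n i : ℕ) : ℤ :=
  ∑ j ∈ Finset.range (i + 1), (-1 : ℤ) ^ j * ((n + 1).choose j : ℤ) * ((i - j : ℕ) : ℤ) ^ n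

/-!
The definition of `A(n,i)` says exactly that `A(n,i)` is the coefficient of `t^i` in
`(1 - t)^(n+1) · Σ_k k^n t^k`. For `i > n` it is, up to sign, an `(n+1)`-st forward difference of
`x ↦ x^n`, hence zero, so this series is a polynomial of degree at most `n`. Multiplying by
`(1 - t)^(-(n+1)) = Σ_m C(m+n, n) t^m` and comparing coefficients of `t^k` gives the identity.
-/

open Finset PowerSeries

theorem alternating_sum_choose_mul_sub_pow_eq_zero {R : Type*} [CommRing R] {m d : ℕ}
    (h : m < d) (x : R) : ∑ j ∈ range (d + 1), (-1 : R) ^ j * d.choose j * (x - j) ^ m = 0 := by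
  have hΔ := congr_fun (fwdDiff_iter_pow_eq_zero_of_lt (R := R) h) (x - d)
  rw [Pi.zero_apply, fwdDiff_iter_eq_sum_shift, ← sum_range_reflect] at hΔ
  rw [← hΔ]
  refine sum_congr rfl fun j hj => ?_
  have hj : j ≤ d := Nat.lt_succ_iff.mp (mem_range.mp hj)
  rw [Nat.add_sub_cancel, Nat.sub_sub_self hj, Nat.choose_symm hj, nsmul_one, Nat.cast_sub hj,
    zsmul_eq_mul]
  push_cast
  ring

theorem eulerianA_eq_zero_of_lt {n i : ℕ} (h : n < i) : eulerianA n i = 0 := by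
  rw [eulerianA, ← sum_subset (range_subset_range.mpr (by omega : n + 1 + 1 ≤ i + 1)),
    ← alternating_sum_choose_mul_sub_pow_eq_zero n.lt_succ_self (i : ℤ)]
  · refine sum_congr rfl fun j hj => ?_
    rw [Nat.cast_sub (by simp at hj; omega)]
  · intro j _ hj
    rw [Nat.choose_eq_zero_of_lt (by simpa using hj)]
    simp

theorem PowerSeries.coeff_one_sub_X_pow {R : Type*} [CommRing R] (m j : ℕ) :
    coeff j ((1 - X : R⟦X⟧) ^ m) = (-1) ^ j * m.choose j := by
  have : (1 - X : R⟦X⟧) ^ m = rescale (-1) (((1 + Polynomial.X) ^ m : Polynomial R) : R⟦X⟧) := by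
    simp [sub_eq_add_neg]
  rw [this, coeff_rescale, Polynomial.coeff_coe, Polynomial.coeff_one_add_X_pow]

theorem coeff_one_sub_X_pow_mul_mk_pow (n i : ℕ) :
    coeff i ((1 - X : ℤ⟦X⟧) ^ (n + 1) * PowerSeries.mk (fun k => (k : ℤ) ^ n)) =
      eulerianA n i := by
  rw [coeff_mul, Nat.sum_antidiagonal_eq_sum_range_succ_mk]
  simp only [coeff_one_sub_X_pow, coeff_mk]
  rfl

theorem one_sub_X_pow_mul_mk_pow (n : ℕ) :
    (1 - X : ℤ⟦X⟧) ^ (n + 1) * PowerSeries.mk (fun k => (k : ℤ) ^ n) =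
      ∑ i ∈ range (n + 1), C (eulerianA n i) * X ^ i := by
  ext i
  rw [coeff_one_sub_X_pow_mul_mk_pow, map_sum]
  simp only [coeff_C_mul_X_pow, sum_ite_eq, mem_range]
  split_ifs with hi
  · rfl
  · exact eulerianA_eq_zero_of_lt (by omega)

theorem coeff_X_pow_mul_mk_choose {n i : ℕ} (hi : i ≤ n) (k : ℕ) :
    coeff k ((X : ℤ⟦X⟧) ^ i * PowerSeries.mk fun m => ((n + m).choose n : ℤ)) =
      (k + n - i).choose n := by
  rw [coeff_X_pow_mul', coeff_mk]
  split_ifs with hik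
  · congr 2
    omega
  · rw [Nat.choose_eq_zero_of_lt (by omega), Nat.cast_zero]

theorem hstar_pow_eq_eulerian_general (n : ℕ) (k : ℕ) :
    (k : ℤ) ^ n =
      ∑ i ∈ Finset.range (n + 1), eulerianA n i * ((k + n - i).choose n : ℤ) := by
  calc (k : ℤ) ^ n = coeff k (PowerSeries.mk fun k => (k : ℤ) ^ n) := by rw [coeff_mk]
    _ = coeff k ((∑ i ∈ range (n + 1), C (eulerianA n i) * X ^ i) *
          PowerSeries.mk fun m => ((n + m).choose n : ℤ)) := by
      rw [← one_sub_X_pow_mul_mk_pow, mul_right_comm, mul_comm ((1 - X) ^ _),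
        mk_add_choose_mul_one_sub_pow_eq_one, one_mul]
    _ = _ := by
      simp only [sum_mul, map_sum, mul_assoc, coeff_C_mul]
      exact sum_congr rfl fun i hi => by
        rw [coeff_X_pow_mul_mk_choose (Nat.lt_succ_iff.mp (mem_range.mp hi))]

/-- The h*-vector of `k^n` is given by Eulerian numbers:
`k^n = Σ_{i=0}^{n} A(n,i) · C(k+n-i, n)`. -/
theorem hstar_pow_eq_eulerian (n : ℕ) (hn : 1 ≤ n) (k : ℕ) :
    (k : ℤ) ^ n =
      ∑ i ∈ Finset.range (n + 1), eulerianA n i * ((k + n - i).choose n : ℤ) :=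
  hstar_pow_eq_eulerian_general n k
end

section
/- For every positive integer n, the polynomial (2k+1)^n equals Σ_{i=0}^{n} B(n+1,i+1) · C(k+n-i, n), where B(n,i) = Σ_{j=1}^{i} (-1)^{i-j} · C(n, i-j) · (2j-1)^{n-1} is the MacMahon number. -/
/-!
If the `(n+1)`-st forward difference of `f : ℕ → R` vanishes, then the coefficient of `t^(a+n+1)`
in `h(t) = (1 - t)^(n+1) ∑ f(k) t^k` is `Δ^(n+1) f (a) = 0`, so `h` has degree at most `n`.
Multiplying by `(1 - t)^(-(n+1)) = ∑ C(n+e, n) t^e` gives `f k = ∑_{i ≤ n} h_i C(k+n-i, n)`.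
For `f k = (2k+1)^n`, a polynomial of degree `n`, the Cauchy product shows that `h_i` is the
MacMahon number `B(n+1, i+1)`.
-/

/-- MacMahon number `B(n,i) = Σ_{j=1}^{i} (-1)^{i-j} C(n,i-j) (2j-1)^{n-1}`. -/
def macmahonB (n i : ℕ) : ℤ :=
  ∑ j ∈ Finset.Icc 1 i, (-1 : ℤ) ^ (i - j) * (n.choose (i - j) : ℤ) * ((2 * j - 1 : ℕ) : ℤ) ^ (n - 1)

open Finset hiding mk
open PowerSeries fwdDiff

section

variable {R : Type*} [CommRing R]

theorem Polynomial.fwdDiff_iter_eval_natCast_eq_zero_of_natDegree_lt {P : Polynomial R} {N : ℕ}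
    (hP : P.natDegree < N) : Δ_[1] ^[N] (fun k : ℕ ↦ P.eval (k : R)) = 0 :=
  _root_.funext fun a ↦ by
    simpa [fwdDiff_iter_eq_sum_shift] using congr_fun (P.fwdDiff_iter_eq_zero_of_degree_lt hP) a

namespace PowerSeries

theorem coeff_one_sub_X_pow_s2 (N m : ℕ) :
    coeff m ((1 - X : R⟦X⟧) ^ N) = (-1) ^ m * N.choose m := by
  have : (1 - X : R⟦X⟧) ^ N = rescale (-1) (((1 + Polynomial.X) ^ N : Polynomial R) : R⟦X⟧) := by
    simp [sub_eq_add_neg]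
  rw [this, coeff_rescale, Polynomial.coeff_coe, Polynomial.coeff_one_add_X_pow]

theorem coeff_one_sub_X_pow_mul_mk (f : ℕ → R) (N d : ℕ) :
    coeff d ((1 - X) ^ N * mk f) = ∑ m ∈ range (d + 1), (-1) ^ m * N.choose m * f (d - m) := by
  simp [coeff_mul, Nat.sum_antidiagonal_eq_sum_range_succ_mk, coeff_one_sub_X_pow_s2]

theorem coeff_add_one_sub_X_pow_mul_mk_eq_fwdDiff_iter (f : ℕ → R) (N a : ℕ) :
    coeff (a + N) ((1 - X) ^ N * mk f) = Δ_[1] ^[N] f a := by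
  rw [coeff_one_sub_X_pow_mul_mk, ← sum_subset (range_subset_range.2 (by omega : N + 1 ≤ a + N + 1)),
    ← sum_range_reflect, fwdDiff_iter_eq_sum_shift]
  · refine sum_congr rfl fun m hm ↦ ?_
    have hm : m ≤ N := Nat.lt_succ_iff.1 (mem_range.1 hm)
    rw [zsmul_eq_mul, smul_eq_mul, mul_one, Nat.add_sub_cancel, Nat.choose_symm hm,
      show a + N - (N - m) = a + m by omega]
    push_cast
    ring
  · intro m _ hm
    rw [Nat.choose_eq_zero_of_lt (by simpa using hm)]
    simp

-- Without `i ≤ n`, the case `n = 0 < k < i` fails: the truncated `k + n - i` gives `C(0, 0) = 1`.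
theorem coeff_X_pow_mul_mk_choose {n i : ℕ} (hi : i ≤ n) (k : ℕ) :
    coeff k ((X : R⟦X⟧) ^ i * mk fun e ↦ ((n + e).choose n : R)) = (k + n - i).choose n := by
  rw [coeff_X_pow_mul', coeff_mk]
  split_ifs with hik
  · rw [show n + (k - i) = k + n - i by omega]
  · rw [Nat.choose_eq_zero_of_lt (show k + n - i < n by omega), Nat.cast_zero]

theorem eq_sum_coeff_mul_choose_of_fwdDiff_iter_eq_zero {f : ℕ → R} {n : ℕ}
    (hf : Δ_[1] ^[n + 1] f = 0) (k : ℕ) :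
    f k = ∑ i ∈ range (n + 1),
      coeff i ((1 - X) ^ (n + 1) * mk f) * ((k + n - i).choose n : R) := by
  set h := (1 - X : R⟦X⟧) ^ (n + 1) * mk f with h_def
  have h_eq_sum : h = ∑ i ∈ range (n + 1), C (coeff i h) * X ^ i := by
    ext d
    simp only [map_sum, coeff_C_mul_X_pow, sum_ite_eq, mem_range]
    split_ifs with hd
    · rfl
    · obtain ⟨a, rfl⟩ : ∃ a, d = a + (n + 1) := ⟨d - (n + 1), by omega⟩
      rw [h_def, coeff_add_one_sub_X_pow_mul_mk_eq_fwdDiff_iter, hf, Pi.zero_apply]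
  have mk_eq : mk f = h * mk fun e ↦ ((n + e).choose n : R) := by
    rw [h_def, mul_comm, ← mul_assoc, mk_add_choose_mul_one_sub_pow_eq_one, one_mul]
  rw [← coeff_mk k f, mk_eq]
  nth_rw 1 [h_eq_sum]
  simp only [sum_mul, map_sum, mul_assoc, coeff_C_mul]
  refine sum_congr rfl fun i hi ↦ ?_
  rw [coeff_X_pow_mul_mk_choose (Nat.lt_succ_iff.1 (mem_range.1 hi))]

end PowerSeries

end

theorem macmahonB_succ_eq_coeff (n i : ℕ) :
    macmahonB (n + 1) (i + 1) =
      coeff i ((1 - X : ℤ⟦X⟧) ^ (n + 1) * mk fun k ↦ (2 * (k : ℤ) + 1) ^ n) := by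
  rw [coeff_one_sub_X_pow_mul_mk, macmahonB, Nat.add_sub_cancel]
  refine sum_nbij' (fun j ↦ i + 1 - j) (fun m ↦ i + 1 - m) ?_ ?_ ?_ ?_ ?_ <;> intro j hj <;>
    simp only [mem_Icc, mem_range] at hj ⊢
  any_goals omega
  rw [show 2 * j - 1 = 2 * (i - (i + 1 - j)) + 1 by omega]
  push_cast
  ring

theorem hstar_odd_pow_eq_macmahon_general (n : ℕ) (k : ℕ) :
    (2 * (k : ℤ) + 1) ^ n =
      ∑ i ∈ Finset.range (n + 1), macmahonB (n + 1) (i + 1) * ((k + n - i).choose n : ℤ) := by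
  have hdeg : ((2 * Polynomial.X + 1 : Polynomial ℤ) ^ n).natDegree < n + 1 :=
    Nat.lt_succ_of_le (by compute_degree)
  have hf := Polynomial.fwdDiff_iter_eval_natCast_eq_zero_of_natDegree_lt hdeg
  simp only [Polynomial.eval_pow, Polynomial.eval_add, Polynomial.eval_mul, Polynomial.eval_ofNat,
    Polynomial.eval_X, Polynomial.eval_one] at hf
  simp only [macmahonB_succ_eq_coeff]
  exact eq_sum_coeff_mul_choose_of_fwdDiff_iter_eq_zero hf k

/-- The h*-vector of `(2k+1)^n` is given by MacMahon numbers: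
`(2k+1)^n = Σ_{i=0}^{n} B(n+1,i+1) · C(k+n-i, n)`. -/
theorem hstar_odd_pow_eq_macmahon (n : ℕ) (hn : 1 ≤ n) (k : ℕ) :
    (2 * (k : ℤ) + 1) ^ n =
      ∑ i ∈ Finset.range (n + 1), macmahonB (n + 1) (i + 1) * ((k + n - i).choose n : ℤ) :=
  hstar_odd_pow_eq_macmahon_general n k
end

section
/- Let p and q be polynomials of degree d such that deg(p+q) = d-1. Then for all 0 ≤ i ≤ d-1, the i-th entry of the h*-vector of p+q (computed with respect to degree d-1) equals Σ_{j=0}^{i} (h*_j(p) + h*_j(q)), where h*(p) and h*(q) are computed with respect to degree d. -/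
/-- The binomial coefficient polynomial `C(x, m) = x(x-1)···(x-m+1)/m!`. -/
noncomputable def qchoose (x : ℚ) (m : ℕ) : ℚ :=
  (∏ j ∈ Finset.range m, (x - j)) / (m.factorial : ℚ)


lemma prod_self (e : ℕ) : (∏ j ∈ Finset.range e, ((e:ℚ) - j)) = e.factorial := by
  induction e with
  | zero => simp
  | succ n ih =>
    rw [Finset.prod_range_succ',
      Finset.prod_congr rfl (fun j (_ : j ∈ Finset.range n) =>
        show ((n+1:ℕ):ℚ) - ((j+1:ℕ):ℚ) = (n:ℚ) - j by push_cast; ring), ih]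
    push_cast [Nat.factorial_succ]
    ring

lemma qchoose_self (e : ℕ) : qchoose (e:ℚ) e = 1 := by
  have h : (e.factorial : ℚ) ≠ 0 := by exact_mod_cast e.factorial_ne_zero
  simp [qchoose, prod_self, div_self h]

lemma qchoose_nat_lt {n e : ℕ} (h : n < e) : qchoose (n:ℚ) e = 0 := by
  have : (∏ j ∈ Finset.range e, ((n:ℚ) - j)) = 0 :=
    Finset.prod_eq_zero (Finset.mem_range.2 h) (by simp)
  simp [qchoose, this]

lemma pascal (x : ℚ) (m : ℕ) : qchoose (x+1) (m+1) = qchoose x (m+1) + qchoose x m := by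
  have h1 : (∏ j ∈ Finset.range (m+1), (x + 1 - j)) =
      (∏ j ∈ Finset.range m, (x - j)) * (x + 1) := by
    rw [Finset.prod_range_succ']
    congr 1
    · exact Finset.prod_congr rfl (by intro j _; push_cast; ring)
    · simp
  have h2 : (∏ j ∈ Finset.range (m+1), (x - j)) =
      (∏ j ∈ Finset.range m, (x - j)) * (x - m) := Finset.prod_range_succ _ _
  have hm : (m.factorial : ℚ) ≠ 0 := by exact_mod_cast m.factorial_ne_zero
  have hm1 : ((m+1).factorial : ℚ) ≠ 0 := by exact_mod_cast (m+1).factorial_ne_zero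
  simp only [qchoose, h1, h2]
  rw [Nat.factorial_succ] at *
  field_simp
  push_cast
  ring

lemma uniq (e : ℕ) (b : ℕ → ℚ)
    (h : ∀ k : ℕ, ∑ i ∈ Finset.range (e+1), b i * qchoose ((k:ℚ)+e-i) e = 0) :
    ∀ i ≤ e, b i = 0 := by
  intro i
  induction i using Nat.strong_induction_on with
  | _ i ih =>
    intro hi
    have hk := h i
    have : ∑ j ∈ Finset.range (e+1), b j * qchoose ((i:ℚ)+e-j) e = b i := by
      rw [Finset.sum_eq_single i]
      · have : ((i:ℚ) + e - i) = (e:ℚ) := by ring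
        rw [this, qchoose_self, mul_one]
      · intro j hj hne
        rcases lt_or_gt_of_ne hne with hlt | hgt
        · rw [ih j hlt (le_trans (le_of_lt hlt) hi), zero_mul]
        · have hje : j ≤ e := Nat.lt_succ_iff.mp (Finset.mem_range.mp hj)
          have hcast : (i:ℚ) + e - j = ((i + e - j : ℕ) : ℚ) := by
            have : j ≤ i + e := le_trans hje (Nat.le_add_left e i)
            push_cast [Nat.cast_sub this]; ring
          have hlt2 : i + e - j < e := by omega
          rw [hcast, qchoose_nat_lt hlt2, mul_zero]
      · intro hmem
        exact absurd (Finset.mem_range.mpr (Nat.lt_succ_of_le hi)) hmem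
    rw [hk] at this
    exact this.symm

lemma abel (n : ℕ) (f A : ℕ → ℚ) :
    ∑ i ∈ Finset.range n, f i * (A i - A (i+1)) =
    ∑ j ∈ Finset.range (n+1),
      ((if j < n then f j else 0) - (if j = 0 then 0 else f (j-1))) * A j := by
  have h1 : ∑ j ∈ Finset.range (n+1), (if j < n then f j else 0) * A j
      = ∑ i ∈ Finset.range n, f i * A i := by
    rw [Finset.sum_range_succ]
    have hz : (if n < n then f n else 0) * A n = 0 := by simp
    rw [hz, add_zero]
    exact Finset.sum_congr rfl fun j hj => by
      rw [if_pos (Finset.mem_range.mp hj)]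
  have h2 : ∑ j ∈ Finset.range (n+1), (if j = 0 then 0 else f (j-1)) * A j
      = ∑ i ∈ Finset.range n, f i * A (i+1) := by
    rw [Finset.sum_range_succ']
    simp
  simp only [sub_mul, Finset.sum_sub_distrib, h1, h2, mul_sub]

/-- If `p` and `q` have degree `d` and `deg(p+q) = d-1`, then for `0 ≤ i ≤ d-1`
the `i`-th entry of the h*-vector of `p+q` (with respect to degree `d-1`)
equals `Σ_{j=0}^{i} (h*_j(p) + h*_j(q))`, where `h*(p)`, `h*(q)` are taken with
respect to degree `d`. -/
theorem hstar_add_degree_drop (d : ℕ) (hd : 1 ≤ d) (p q : Polynomial ℚ)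
    (hp : p.natDegree = d) (hq : q.natDegree = d)
    (hpq0 : p + q ≠ 0) (hpq : (p + q).natDegree = d - 1)
    (hsp hsq hspq : ℕ → ℚ)
    (hrp : ∀ k : ℕ, p.eval (k : ℚ) =
      ∑ i ∈ Finset.range (d + 1), hsp i * qchoose ((k : ℚ) + d - i) d)
    (hrq : ∀ k : ℕ, q.eval (k : ℚ) =
      ∑ i ∈ Finset.range (d + 1), hsq i * qchoose ((k : ℚ) + d - i) d)
    (hrpq : ∀ k : ℕ, (p + q).eval (k : ℚ) =
      ∑ i ∈ Finset.range d, hspq i * qchoose ((k : ℚ) + (d - 1 : ℕ) - i) (d - 1)) :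
    ∀ i ≤ d - 1, hspq i = ∑ j ∈ Finset.range (i + 1), (hsp j + hsq j) := by
  set a : ℕ → ℚ := fun j => hsp j + hsq j with ha
  set c : ℕ → ℚ := fun j =>
    (if j < d then hspq j else 0) - (if j = 0 then 0 else hspq (j-1)) with hc
  have hde : (d - 1) + 1 = d := Nat.succ_pred_eq_of_pos hd
  have hcast : ((d - 1 : ℕ) : ℚ) = (d : ℚ) - 1 := by
    push_cast [Nat.cast_sub hd]; ring
  -- key: a j = c j for j ≤ d
  have key : ∀ j ≤ d, a j = c j := by
    have h0 : ∀ k : ℕ, ∑ j ∈ Finset.range (d+1),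
        (a j - c j) * qchoose ((k:ℚ)+d-j) d = 0 := by
      intro k
      have hsub : ∑ j ∈ Finset.range (d+1), (a j - c j) * qchoose ((k:ℚ)+d-j) d
          = (∑ j ∈ Finset.range (d+1), a j * qchoose ((k:ℚ)+d-j) d)
            - ∑ j ∈ Finset.range (d+1), c j * qchoose ((k:ℚ)+d-j) d := by
        rw [← Finset.sum_sub_distrib]
        exact Finset.sum_congr rfl fun j _ => by ring
      have hA : ∑ j ∈ Finset.range (d+1), a j * qchoose ((k:ℚ)+d-j) d
          = (p+q).eval (k:ℚ) := by
        rw [Polynomial.eval_add, hrp k, hrq k, ← Finset.sum_add_distrib]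
        exact (Finset.sum_congr rfl fun j _ => by simp only [ha]; ring).symm
      have hC : ∑ j ∈ Finset.range (d+1), c j * qchoose ((k:ℚ)+d-j) d
          = (p+q).eval (k:ℚ) := by
        rw [hrpq k]
        rw [← abel d hspq (fun j => qchoose ((k:ℚ)+d-j) d)]
        refine (Finset.sum_congr rfl fun i hi => ?_).symm
        have hx : qchoose ((k:ℚ)+d-i) d - qchoose ((k:ℚ)+d-(i+1:ℕ)) d
            = qchoose ((k:ℚ)+(d-1:ℕ)-i) (d-1) := by
          have := pascal ((k:ℚ)+(d-1:ℕ)-i) (d-1)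
          rw [hde] at this
          have e1 : (k:ℚ)+(d-1:ℕ)-i + 1 = (k:ℚ)+d-i := by rw [hcast]; ring
          have e2 : (k:ℚ)+(d-1:ℕ)-i = (k:ℚ)+d-(i+1:ℕ) := by
            rw [hcast]; push_cast; ring
          rw [e1, e2] at this
          rw [e2]
          linarith
        rw [← hx]
      rw [hsub, hA, hC, sub_self]
    intro j hj
    have h1 : a j - c j = 0 := uniq d (fun j => a j - c j) h0 j hj
    linarith
  -- telescoping
  intro i hi
  induction i with
  | zero =>
    have h := key 0 (Nat.zero_le d)
    have h0d : 0 < d := hd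
    simp only [ha, hc, if_pos h0d] at h
    norm_num at h
    rw [Finset.sum_range_one]
    linarith
  | succ n ih =>
    have hn : n ≤ d - 1 := Nat.le_of_succ_le hi
    have hnd : n + 1 < d := by omega
    have h := key (n+1) (le_of_lt hnd)
    simp only [ha, hc, if_pos hnd, Nat.succ_ne_zero, if_false, Nat.add_sub_cancel] at h
    rw [Finset.sum_range_succ, ← ih hn]
    linarith
end

section
/- Let P ⊂ ℝ^d be a reflexive lattice polytope and let S be a linear subspace of ℝ^d. If Q := P ∩ S is a lattice polytope, then Q is reflexive (as a polytope in the lattice S ∩ ℤ^d), i.e., the only lattice point in the relative interior of Q is the origin, and for every positive integer k, the lattice points in the relative interior of (k+1)Q are exactly the lattice points in kQ. -/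
/-!
Reflexivity of `P` puts `0` in its interior. A convex `P` with `0` in its interior meets a
linear subspace `S` in a set spanning `S`, so the relative interior of `P ∩ S` is its interior
inside `S`. Pulling back along the inclusion `S → ℝ^d` commutes with taking interiors: a point of
a convex neighbourhood of `0` is interior exactly when its gauge is `< 1`, and the gauge of `P`
at `x ∈ S` is at most that of `P ∩ S` inside `S`. So `relint Q = interior P ∩ S`, and since
dilations preserve `S`, both conditions of reflexivity for `Q` are those for `P` cut down to `S`.
-/

open scoped Pointwise
/-- A point of `ℝ^d` is a lattice point if all its coordinates are integers. -/
def IsLatticePt {d : ℕ} (x : Fin d → ℝ) : Prop := ∀ i, ∃ z : ℤ, x i = (z : ℝ)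

open Set Filter Topology

theorem smul_inter_submodule {𝕜 E : Type*} [DivisionRing 𝕜] [AddCommGroup E] [Module 𝕜 E]
    {c : 𝕜} (hc : c ≠ 0) (P : Set E) (S : Submodule 𝕜 E) : c • (P ∩ S) = c • P ∩ S := by
  have hS : c • (S : Set E) = S := by
    ext x
    rw [mem_smul_set_iff_inv_smul_mem₀ hc, SetLike.mem_coe, SetLike.mem_coe,
      S.smul_mem_iff (inv_ne_zero hc)]
  rw [smul_set_inter₀ hc, hS]

section

variable {E : Type*} [AddCommGroup E] [Module ℝ E] [TopologicalSpace E] [ContinuousSMul ℝ E]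
  {P : Set E}

theorem affineSpan_inter_submodule_of_zero_mem_interior (h0 : (0 : E) ∈ interior P)
    (S : Submodule ℝ E) : affineSpan ℝ (P ∩ S) = S.toAffineSubspace := by
  refine le_antisymm (affineSpan_le.2 inter_subset_right) fun x (hx : x ∈ S) ↦ ?_
  have hlim : Tendsto (fun t : ℝ ↦ t • x) (𝓝[≠] 0) (𝓝 0) :=
    ((continuous_id.smul continuous_const).tendsto' 0 0 (zero_smul ℝ x)).mono_left
      nhdsWithin_le_nhds
  obtain ⟨t, htP, ht0⟩ :=
    ((hlim.eventually (isOpen_interior.mem_nhds h0)).and self_mem_nhdsWithin).exists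
  have hmem : ∀ {y}, y ∈ P ∩ S → y ∈ affineSpan ℝ (P ∩ S) := fun hy ↦ mem_affineSpan ℝ hy
  have h0Q : (0 : E) ∈ P ∩ S := ⟨interior_subset h0, S.zero_mem⟩
  simpa [smul_smul, inv_mul_cancel₀ (show t ≠ 0 from ht0)] using
    (affineSpan ℝ (P ∩ S)).smul_vsub_vadd_mem t⁻¹
      (hmem ⟨interior_subset htP, S.smul_mem t hx⟩) (hmem h0Q) (hmem h0Q)

variable [IsTopologicalAddGroup E]

theorem Convex.interior_preimage_of_zero_mem_interior {F : Type*} [AddCommGroup F] [Module ℝ F]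
    [TopologicalSpace F] [IsTopologicalAddGroup F] [ContinuousSMul ℝ F]
    (hP : Convex ℝ P) (h0 : (0 : E) ∈ interior P) (f : F →L[ℝ] E) :
    interior (f ⁻¹' P) = f ⁻¹' interior P := by
  refine (preimage_interior_subset_interior_preimage f.continuous).antisymm' fun x hx ↦ ?_
  have hP0 : P ∈ 𝓝 0 := mem_interior_iff_mem_nhds.1 h0
  have hfP0 : f ⁻¹' P ∈ 𝓝 0 := f.continuous.continuousAt.preimage_mem_nhds (by simpa using hP0)
  obtain ⟨r, hr0, hr1, y, hy, rfl⟩ := exists_lt_of_gauge_lt (absorbent_nhds_zero hfP0)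
    ((gauge_lt_one_iff_mem_interior (hP.linear_preimage f.toLinearMap) hfP0).2 hx)
  have hfy : f y ∈ P := hy
  rw [mem_preimage, ← gauge_lt_one_iff_mem_interior hP hP0, map_smul]
  exact (gauge_le_of_mem hr0.le (smul_mem_smul_set hfy)).trans_lt hr1

theorem Convex.intrinsicInterior_inter_submodule (hP : Convex ℝ P) (h0 : (0 : E) ∈ interior P)
    (S : Submodule ℝ E) : intrinsicInterior ℝ (P ∩ S) = interior P ∩ S := by
  rw [intrinsicInterior, affineSpan_inter_submodule_of_zero_mem_interior h0 S]
  -- the points of `S.toAffineSubspace` are definitionally those of `S`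
  change ((↑) : S → E) '' interior (S.subtypeL ⁻¹' (P ∩ S)) = _
  have hS : S.subtypeL ⁻¹' (S : Set E) = univ := eq_univ_of_forall fun y ↦ y.2
  rw [preimage_inter, hS, inter_univ, hP.interior_preimage_of_zero_mem_interior h0]
  exact (Subtype.image_preimage_coe _ _).trans (inter_comm _ _)

end

theorem reflexive_section_general (d : ℕ) (P : Set (Fin d → ℝ))
    (V : Finset (Fin d → ℝ))
    (hPV : P = convexHull ℝ (V : Set (Fin d → ℝ)))
    (hrefl1 : interior P ∩ {x | IsLatticePt x} = {0})
    (hrefl2 : ∀ k : ℕ, 0 < k →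
      interior (((k : ℝ) + 1) • P) ∩ {x | IsLatticePt x} = ((k : ℝ) • P) ∩ {x | IsLatticePt x})
    (S : Submodule ℝ (Fin d → ℝ)) (Q : Set (Fin d → ℝ)) (hQ : Q = P ∩ (S : Set (Fin d → ℝ))) :
    intrinsicInterior ℝ Q ∩ {x | IsLatticePt x} = {0} ∧
      ∀ k : ℕ, 0 < k →
        intrinsicInterior ℝ (((k : ℝ) + 1) • Q) ∩ {x | IsLatticePt x} =
          ((k : ℝ) • Q) ∩ {x | IsLatticePt x} := by
  subst hQ
  have hP : Convex ℝ P := hPV ▸ convex_convexHull ℝ _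
  have h0 : (0 : Fin d → ℝ) ∈ interior P := (hrefl1.symm.subset (mem_singleton 0)).1
  refine ⟨?_, fun k hk ↦ ?_⟩
  · rw [hP.intrinsicInterior_inter_submodule h0, inter_right_comm, hrefl1,
      inter_eq_self_of_subset_left (singleton_subset_iff.2 S.zero_mem)]
  · have hk1 : (k : ℝ) + 1 ≠ 0 := by positivity
    have h0k : (0 : Fin d → ℝ) ∈ interior (((k : ℝ) + 1) • P) := by
      rw [interior_smul₀ hk1]
      exact ⟨0, h0, smul_zero _⟩
    rw [smul_inter_submodule hk1, (hP.smul _).intrinsicInterior_inter_submodule h0k,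
      inter_right_comm, hrefl2 k hk, smul_inter_submodule (Nat.cast_ne_zero.2 hk.ne'),
      inter_right_comm]

/-- If `P ⊂ ℝ^d` is a reflexive lattice polytope, `S` a linear subspace and
`Q = P ∩ S` is a lattice polytope, then `Q` is reflexive: the only lattice
point in the relative interior of `Q` is the origin, and for every `k > 0` the
lattice points in the relative interior of `(k+1)Q` are exactly the lattice
points of `kQ`. -/
theorem reflexive_section (d : ℕ) (P : Set (Fin d → ℝ))
    (V : Finset (Fin d → ℝ)) (hV : ∀ v ∈ V, IsLatticePt v)
    (hPV : P = convexHull ℝ (V : Set (Fin d → ℝ)))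
    (hrefl1 : interior P ∩ {x | IsLatticePt x} = {0})
    (hrefl2 : ∀ k : ℕ, 0 < k →
      interior (((k : ℝ) + 1) • P) ∩ {x | IsLatticePt x} = ((k : ℝ) • P) ∩ {x | IsLatticePt x})
    (S : Submodule ℝ (Fin d → ℝ)) (Q : Set (Fin d → ℝ)) (hQ : Q = P ∩ (S : Set (Fin d → ℝ)))
    (W : Finset (Fin d → ℝ)) (hW : ∀ v ∈ W, IsLatticePt v)
    (hQW : Q = convexHull ℝ (W : Set (Fin d → ℝ))) :
    intrinsicInterior ℝ Q ∩ {x | IsLatticePt x} = {0} ∧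
      ∀ k : ℕ, 0 < k →
        intrinsicInterior ℝ (((k : ℝ) + 1) • Q) ∩ {x | IsLatticePt x} =
          ((k : ℝ) • Q) ∩ {x | IsLatticePt x} :=
  reflexive_section_general d P V hPV hrefl1 hrefl2 S Q hQ
end
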